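/- arXiv:quant-ph/9512032 — 3 statements merged into one kernel-verified Lean document; each statement's English description precedes it below -/
import Mathlib

section
/- Let C₂ ⊆ C₁ ⊆ F_2^n be linear codes and let t be a natural number such that C₁ has minimum distance greater than 2t. Let a, a', b, b' ∈ F_2^n each of Hamming weight at most t. Then for all w, w' ∈ C₂^⊥, ⟨E_{a,b} c_w, E_{a',b'} c_w⟩ = ⟨E_{a,b} c_{w'}, E_{a',b'} c_{w'}⟩, where the codeword states are defined with respect to C₁ and ⟨f, g⟩ = Σ_{x ∈ F_2^n} conj(f(x))·g(x). (The diagonal error matrix elements are independent of the quantum codeword, so measuring the error reveals no information about the encoded state.) -/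
open Finset
open scoped Classical

/-- The dual code `C^⊥ = {v : ∀ c ∈ C, v·c = 0}`. -/
def dualCode {n : ℕ} (C : Submodule (ZMod 2) (Fin n → ZMod 2)) :
    Submodule (ZMod 2) (Fin n → ZMod 2) where
  carrier := {v | ∀ c ∈ C, ∑ i, v i * c i = 0}
  add_mem' := by
    intro a b ha hb c hc
    simp only [Set.mem_setOf_eq] at *
    simp [Pi.add_apply, add_mul, Finset.sum_add_distrib, ha c hc, hb c hc]
  zero_mem' := by simp
  smul_mem' := by
    intro m a ha c hc
    simp only [Set.mem_setOf_eq] at *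
    simp [Pi.smul_apply, smul_eq_mul, mul_assoc, ← Finset.mul_sum, ha c hc]

/-- `(-1)^b` for `b ∈ F₂`, as a complex number. -/
def signC (b : ZMod 2) : ℂ := if b = 0 then 1 else -1

/-- The codeword state `c_w` with respect to `C₁`. -/
noncomputable def codewordState {n : ℕ} (C : Submodule (ZMod 2) (Fin n → ZMod 2))
    (w : Fin n → ZMod 2) : (Fin n → ZMod 2) → ℂ := fun x =>
  if x ∈ C then
    (((2 : ℝ) ^ (-(Module.finrank (ZMod 2) C : ℝ) / 2) : ℝ) : ℂ) * signC (∑ i, x i * w i)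
  else 0

/-- The error operator `E_{a,b}` (bit errors `a`, phase errors `b`):
`(E_{a,b} f) x = (-1)^(b·x) · f (x + a)`. -/
def errOp {n : ℕ} (a b : Fin n → ZMod 2) (f : (Fin n → ZMod 2) → ℂ) :
    (Fin n → ZMod 2) → ℂ := fun x => signC (∑ i, b i * x i) * f (x + a)


lemma signC_conj (s : ZMod 2) : (starRingEnd ℂ) (signC s) = signC s := by
  unfold signC; split <;> simp

lemma signC_sq (s : ZMod 2) : signC s * signC s = 1 := by
  unfold signC; split <;> ring

/-- The diagonal error matrix elements are independent of the quantum codeword: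
measuring the error reveals no information about the encoded state. -/
theorem erroredCodewordStates_diag_independent
    {n t : ℕ} (C₁ C₂ : Submodule (ZMod 2) (Fin n → ZMod 2)) (h : C₂ ≤ C₁)
    (hd₁ : ∀ v ∈ C₁, v ≠ 0 → 2 * t < hammingNorm v)
    (a a' b b' : Fin n → ZMod 2)
    (ha : hammingNorm a ≤ t) (ha' : hammingNorm a' ≤ t)
    (hb : hammingNorm b ≤ t) (hb' : hammingNorm b' ≤ t)
    (w w' : Fin n → ZMod 2)
    (hw : w ∈ dualCode C₂) (hw' : w' ∈ dualCode C₂) :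
    (∑ x : Fin n → ZMod 2,
        (starRingEnd ℂ) (errOp a b (codewordState C₁ w) x)
          * errOp a' b' (codewordState C₁ w) x)
      = (∑ x : Fin n → ZMod 2,
        (starRingEnd ℂ) (errOp a b (codewordState C₁ w') x)
          * errOp a' b' (codewordState C₁ w') x) := by
  apply Finset.sum_congr rfl
  intro x _
  by_cases h1 : x + a ∈ C₁
  · by_cases h2 : x + a' ∈ C₁
    · have hxx : x + x = 0 := by
        funext i; exact (by decide : ∀ z : ZMod 2, z + z = 0) (x i)
      have hsum : a + a' ∈ C₁ := by
        have hm := C₁.add_mem h1 h2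
        have heq : (x + a) + (x + a') = a + a' := by
          calc (x + a) + (x + a') = (x + x) + (a + a') := by ring
          _ = a + a' := by rw [hxx]; ring
        rwa [heq] at hm
      have haa : a = a' := by
        by_contra hne
        have hne0 : a + a' ≠ 0 := by
          intro h0
          apply hne
          have : a = -a' := eq_neg_of_add_eq_zero_left h0
          rw [this]; funext i
          exact (by decide : ∀ z : ZMod 2, -z = z) (a' i)
        have hlt := hd₁ _ hsum hne0
        have hle : hammingNorm (a + a') ≤ hammingNorm a + hammingNorm a' := by
          have h1' : a + a' = a - a' := by
            funext i; exact (by decide : ∀ u v : ZMod 2, u + v = u - v) (a i) (a' i)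
          rw [h1', sub_eq_neg_add, ← hammingDist_eq_hammingNorm, hammingDist_comm]
          calc hammingDist a a' ≤ hammingDist a 0 + hammingDist 0 a' :=
              hammingDist_triangle a 0 a'
          _ = hammingNorm a + hammingNorm a' := by
              rw [hammingDist_zero_right, hammingDist_zero_left]
        omega
      subst haa
      simp only [errOp, codewordState, if_pos h1]
      have key : ∀ u : ZMod 2,
          (starRingEnd ℂ) (signC (∑ i, b i * x i) *
            ((((2 : ℝ) ^ (-(Module.finrank (ZMod 2) C₁ : ℝ) / 2) : ℝ) : ℂ) * signC u)) *
          (signC (∑ i, b' i * x i) *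
            ((((2 : ℝ) ^ (-(Module.finrank (ZMod 2) C₁ : ℝ) / 2) : ℝ) : ℂ) * signC u)) =
          signC (∑ i, b i * x i) * signC (∑ i, b' i * x i) *
            ((((2 : ℝ) ^ (-(Module.finrank (ZMod 2) C₁ : ℝ) / 2) : ℝ) : ℂ) *
             (((2 : ℝ) ^ (-(Module.finrank (ZMod 2) C₁ : ℝ) / 2) : ℝ) : ℂ)) := by
        intro u
        rw [map_mul, map_mul, signC_conj, signC_conj, Complex.conj_ofReal]
        calc signC (∑ i, b i * x i) *
              ((((2 : ℝ) ^ (-(Module.finrank (ZMod 2) C₁ : ℝ) / 2) : ℝ) : ℂ) * signC u) *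
              (signC (∑ i, b' i * x i) *
                ((((2 : ℝ) ^ (-(Module.finrank (ZMod 2) C₁ : ℝ) / 2) : ℝ) : ℂ) * signC u))
            = signC (∑ i, b i * x i) * signC (∑ i, b' i * x i) *
              ((((2 : ℝ) ^ (-(Module.finrank (ZMod 2) C₁ : ℝ) / 2) : ℝ) : ℂ) *
               (((2 : ℝ) ^ (-(Module.finrank (ZMod 2) C₁ : ℝ) / 2) : ℝ) : ℂ)) *
              (signC u * signC u) := by ring
        _ = _ := by rw [signC_sq, mul_one]
      rw [key, key]
    · simp [errOp, codewordState, h2]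
  · simp [errOp, codewordState, h1]
end

section
/- Fix n and k. For v ∈ F_2^n, let N(v) denote the number of k-dimensional linear subspaces C of F_2^n such that the all-ones vector 1^n belongs to C, C ⊆ C^⊥, and v ∈ C^⊥. Then N(v₁) = N(v₂) for any two vectors v₁, v₂ ∈ F_2^n of even Hamming weight with v₁, v₂ ∉ {0, 1^n}. (The number of k-dimensional weakly self-dual codes whose dual contains a given nonzero even-weight vector v ≠ 1^n is independent of v.) -/
open Finset

section Bf
variable {n : ℕ}

/-- The standard bilinear form over `F₂`. -/
def Bf (v w : Fin n → ZMod 2) : ZMod 2 := ∑ i, v i * w i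

lemma Bf_comm (v w : Fin n → ZMod 2) : Bf v w = Bf w v := by
  unfold Bf; exact Finset.sum_congr rfl fun i _ => mul_comm _ _

lemma Bf_add_left (v w x : Fin n → ZMod 2) : Bf (v + w) x = Bf v x + Bf w x := by
  unfold Bf; simp [add_mul, Finset.sum_add_distrib]

lemma Bf_add_right (v w x : Fin n → ZMod 2) : Bf x (v + w) = Bf x v + Bf x w := by
  rw [Bf_comm, Bf_add_left, Bf_comm v x, Bf_comm w x]

lemma Bf_smul_left (c : ZMod 2) (v x : Fin n → ZMod 2) : Bf (c • v) x = c * Bf v x := by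
  unfold Bf; simp [Finset.mul_sum, mul_assoc]

lemma Bf_smul_right (c : ZMod 2) (v x : Fin n → ZMod 2) : Bf x (c • v) = c * Bf x v := by
  rw [Bf_comm, Bf_smul_left, Bf_comm]

lemma Bf_single (x : Fin n → ZMod 2) (i : Fin n) : Bf x (Pi.single i 1) = x i := by
  unfold Bf
  rw [Finset.sum_eq_single i]
  · simp
  · intro b _ hb; simp [Pi.single_apply, hb]
  · simp

lemma eq_of_Bf {x z : Fin n → ZMod 2} (h : ∀ y, Bf x y = Bf z y) : x = z := by
  funext i
  have := h (Pi.single i 1)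
  rwa [Bf_single, Bf_single] at this

lemma Bf_self (v : Fin n → ZMod 2) : Bf v v = Bf (fun _ => 1) v := by
  unfold Bf
  refine Finset.sum_congr rfl fun i _ => ?_
  have : ∀ a : ZMod 2, a * a = 1 * a := by decide
  exact this (v i)

/-- Transvection by `u` with `Bf u u = 0` is an isometry. -/
def tv (u : Fin n → ZMod 2) (h : Bf u u = 0) :
    (Fin n → ZMod 2) ≃ₗ[ZMod 2] (Fin n → ZMod 2) where
  toFun x := x + Bf x u • u
  invFun x := x + Bf x u • u
  map_add' x y := by
    rw [Bf_add_left, add_smul]; abel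
  map_smul' c x := by
    simp only [RingHom.id_apply, Bf_smul_left, smul_add, mul_smul]
  left_inv x := by
    simp only [Bf_add_left, Bf_smul_left, h, mul_zero, add_zero, add_smul]
    have : ∀ a : ZMod 2, a + a = 0 := by decide
    rw [add_assoc, ← add_smul, this (Bf x u), zero_smul, add_zero]
  right_inv x := by
    simp only [Bf_add_left, Bf_smul_left, h, mul_zero, add_zero, add_smul]
    have : ∀ a : ZMod 2, a + a = 0 := by decide
    rw [add_assoc, ← add_smul, this (Bf x u), zero_smul, add_zero]

lemma tv_isometry (u : Fin n → ZMod 2) (h : Bf u u = 0) (x y : Fin n → ZMod 2) :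
    Bf (tv u h x) (tv u h y) = Bf x y := by
  show Bf (x + Bf x u • u) (y + Bf y u • u) = Bf x y
  rw [Bf_add_left, Bf_add_right, Bf_add_right, Bf_smul_left, Bf_smul_left, Bf_smul_right,
    Bf_smul_right, h, Bf_comm u y]
  have : ∀ a b c : ZMod 2, (c + b * a) + (a * b + a * (b * 0)) = c := by decide
  exact this (Bf x u) (Bf y u) (Bf x y)

lemma tv_apply_of_eq (u : Fin n → ZMod 2) (h : Bf u u = 0) (x : Fin n → ZMod 2)
    (hx : Bf x u = 1) : tv u h x = x + u := by
  show x + Bf x u • u = x + u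
  rw [hx, one_smul]

end Bf

section Transfer
variable {n : ℕ}

lemma mem_dualCode {C : Submodule (ZMod 2) (Fin n → ZMod 2)} {v : Fin n → ZMod 2} :
    v ∈ dualCode C ↔ ∀ c ∈ C, Bf v c = 0 := Iff.rfl

lemma dualCode_map (g : (Fin n → ZMod 2) ≃ₗ[ZMod 2] (Fin n → ZMod 2))
    (hg : ∀ x y, Bf (g x) (g y) = Bf x y) (C : Submodule (ZMod 2) (Fin n → ZMod 2)) :
    dualCode (C.map (g : (Fin n → ZMod 2) →ₗ[ZMod 2] (Fin n → ZMod 2)))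
      = (dualCode C).map (g : (Fin n → ZMod 2) →ₗ[ZMod 2] (Fin n → ZMod 2)) := by
  ext v
  rw [Submodule.mem_map_equiv, mem_dualCode, mem_dualCode]
  constructor
  · intro h c hc
    have h2 := h (g c) (Submodule.mem_map_of_mem hc)
    rw [← g.apply_symm_apply v] at h2
    rwa [hg] at h2
  · rintro h c hc
    rw [Submodule.mem_map_equiv] at hc
    have := h (g.symm c) hc
    rwa [← hg (g.symm v) (g.symm c), g.apply_symm_apply, g.apply_symm_apply] at this

lemma isometry_one (g : (Fin n → ZMod 2) ≃ₗ[ZMod 2] (Fin n → ZMod 2))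
    (hg : ∀ x y, Bf (g x) (g y) = Bf x y) :
    g (fun _ => 1) = fun _ => 1 := by
  apply eq_of_Bf
  intro y
  have h1 : Bf (g fun _ => 1) y = Bf (fun _ => 1) (g.symm y) := by
    conv_lhs => rw [← g.apply_symm_apply y]
    exact hg _ _
  rw [h1, ← Bf_self, ← hg (g.symm y) (g.symm y), g.apply_symm_apply, Bf_self]

lemma prop_map {k : ℕ} (g : (Fin n → ZMod 2) ≃ₗ[ZMod 2] (Fin n → ZMod 2))
    (hg : ∀ x y, Bf (g x) (g y) = Bf x y) {v : Fin n → ZMod 2}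
    {C : Submodule (ZMod 2) (Fin n → ZMod 2)}
    (h : Module.finrank (ZMod 2) C = k ∧ (fun _ => (1 : ZMod 2)) ∈ C ∧
          C ≤ dualCode C ∧ v ∈ dualCode C) :
    Module.finrank (ZMod 2)
        (C.map (g : (Fin n → ZMod 2) →ₗ[ZMod 2] (Fin n → ZMod 2))) = k ∧
      (fun _ => (1 : ZMod 2)) ∈ C.map (g : (Fin n → ZMod 2) →ₗ[ZMod 2] (Fin n → ZMod 2)) ∧
      C.map (g : (Fin n → ZMod 2) →ₗ[ZMod 2] (Fin n → ZMod 2)) ≤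
        dualCode (C.map (g : (Fin n → ZMod 2) →ₗ[ZMod 2] (Fin n → ZMod 2))) ∧
      g v ∈ dualCode (C.map (g : (Fin n → ZMod 2) →ₗ[ZMod 2] (Fin n → ZMod 2))) := by
  obtain ⟨hrk, hone, hsd, hv⟩ := h
  refine ⟨by rw [LinearEquiv.finrank_map_eq g C]; exact hrk, ?_, ?_, ?_⟩
  · rw [← isometry_one g hg]
    exact Submodule.mem_map_of_mem hone
  · rw [dualCode_map g hg]
    exact Submodule.map_mono hsd
  · rw [dualCode_map g hg]
    exact Submodule.mem_map_of_mem hv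

lemma isometry_symm (g : (Fin n → ZMod 2) ≃ₗ[ZMod 2] (Fin n → ZMod 2))
    (hg : ∀ x y, Bf (g x) (g y) = Bf x y) (x y : Fin n → ZMod 2) :
    Bf (g.symm x) (g.symm y) = Bf x y := by
  rw [← hg (g.symm x) (g.symm y), g.apply_symm_apply, g.apply_symm_apply]

lemma card_eq_of_isometry {k : ℕ} (v₁ v₂ : Fin n → ZMod 2)
    (g : (Fin n → ZMod 2) ≃ₗ[ZMod 2] (Fin n → ZMod 2))
    (hg : ∀ x y, Bf (g x) (g y) = Bf x y) (hv : g v₁ = v₂) :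
    Nat.card {C : Submodule (ZMod 2) (Fin n → ZMod 2) //
        Module.finrank (ZMod 2) C = k ∧ (fun _ => (1 : ZMod 2)) ∈ C ∧
          C ≤ dualCode C ∧ v₁ ∈ dualCode C}
      = Nat.card {C : Submodule (ZMod 2) (Fin n → ZMod 2) //
        Module.finrank (ZMod 2) C = k ∧ (fun _ => (1 : ZMod 2)) ∈ C ∧
          C ≤ dualCode C ∧ v₂ ∈ dualCode C} := by
  apply Nat.card_congr
  refine ⟨fun C => ⟨C.1.map (g : (Fin n → ZMod 2) →ₗ[ZMod 2] (Fin n → ZMod 2)),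
      hv ▸ prop_map g hg C.2⟩,
    fun C => ⟨C.1.map (g.symm : (Fin n → ZMod 2) →ₗ[ZMod 2] (Fin n → ZMod 2)), ?_⟩,
    fun C => ?_, fun C => ?_⟩
  · have hv' : g.symm v₂ = v₁ := by rw [← hv, g.symm_apply_apply]
    have := prop_map g.symm (isometry_symm g hg) C.2
    rwa [hv'] at this
  · apply Subtype.ext
    exact (Submodule.map_symm_eq_iff g).mpr rfl
  · apply Subtype.ext
    exact (Submodule.map_symm_eq_iff g).mp rfl

lemma exists_pair (v₁ v₂ : Fin n → ZMod 2)
    (h₁0 : v₁ ≠ 0) (h₁1 : v₁ ≠ fun _ => 1)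
    (h₂0 : v₂ ≠ 0) (h₂1 : v₂ ≠ fun _ => 1) :
    ∃ a b, v₁ a ≠ v₁ b ∧ v₂ a ≠ v₂ b := by
  by_contra hc
  push_neg at hc
  have zcases : ∀ a : ZMod 2, a = 0 ∨ a = 1 := by decide
  obtain ⟨i, hi⟩ : ∃ i, v₁ i = 1 := by
    by_contra h; push_neg at h
    exact h₁0 (funext fun a => (zcases (v₁ a)).resolve_right (h a))
  obtain ⟨j, hj⟩ : ∃ j, v₁ j = 0 := by
    by_contra h; push_neg at h
    exact h₁1 (funext fun a => (zcases (v₁ a)).resolve_left (h a))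
  have hij : v₂ i = v₂ j := hc i j (by rw [hi, hj]; decide)
  have hconst : ∀ a, v₂ a = v₂ i := by
    intro a
    rcases zcases (v₁ a) with h | h
    · exact hc a i (by rw [h, hi]; decide)
    · rw [hc a j (by rw [h, hj]; decide), hij]
  rcases zcases (v₂ i) with h | h
  · exact h₂0 (funext fun a => by rw [hconst a, h]; rfl)
  · exact h₂1 (funext fun a => by rw [hconst a, h])

lemma Bf_self_zero_of_even {v : Fin n → ZMod 2} (hev : Even (hammingNorm v)) :
    Bf v v = 0 := by
  have hmul : ∀ a : ZMod 2, a * a = a := by decide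
  have h1 : Bf v v = ∑ i ∈ Finset.univ.filter (fun i => v i ≠ 0), v i := by
    unfold Bf
    rw [Finset.sum_filter]
    refine Finset.sum_congr rfl fun i _ => ?_
    rw [hmul]
    by_cases h : v i = 0 <;> simp [h]
  have hone : ∀ i ∈ Finset.univ.filter (fun i => v i ≠ 0), v i = 1 := by
    intro i hi
    have h := (Finset.mem_filter.mp hi).2
    have zcases : ∀ a : ZMod 2, a ≠ 0 → a = 1 := by decide
    exact zcases _ h
  rw [h1, Finset.sum_congr rfl hone, Finset.sum_const, nsmul_eq_mul, mul_one]
  have hcard : (Finset.univ.filter (fun i => v i ≠ 0)).card = hammingNorm v := rfl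
  rw [hcard, ZMod.natCast_eq_zero_iff]
  exact hev.two_dvd

end Transfer

/-- The number of `k`-dimensional weakly self-dual codes whose dual contains a
given nonzero even-weight vector `v ≠ 1ⁿ` is independent of `v`. -/
theorem card_weaklySelfDual_dual_containing_independent
    {n k : ℕ} (v₁ v₂ : Fin n → ZMod 2)
    (hev₁ : Even (hammingNorm v₁)) (hev₂ : Even (hammingNorm v₂))
    (h₁0 : v₁ ≠ 0) (h₁1 : v₁ ≠ fun _ => 1)
    (h₂0 : v₂ ≠ 0) (h₂1 : v₂ ≠ fun _ => 1) :
    Nat.card {C : Submodule (ZMod 2) (Fin n → ZMod 2) //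
        Module.finrank (ZMod 2) C = k ∧ (fun _ => (1 : ZMod 2)) ∈ C ∧
          C ≤ dualCode C ∧ v₁ ∈ dualCode C}
      = Nat.card {C : Submodule (ZMod 2) (Fin n → ZMod 2) //
        Module.finrank (ZMod 2) C = k ∧ (fun _ => (1 : ZMod 2)) ∈ C ∧
          C ≤ dualCode C ∧ v₂ ∈ dualCode C} := by
  -- find coordinates a, b separating v₁ and v₂
  obtain ⟨a, b, hab₁, hab₂⟩ := exists_pair v₁ v₂ h₁0 h₁1 h₂0 h₂1
  have hab : a ≠ b := fun h => hab₁ (by rw [h])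
  set w : Fin n → ZMod 2 := Pi.single a 1 + Pi.single b 1 with hw
  have hadd : ∀ c : ZMod 2, c + c = 0 := by decide
  have hne1 : ∀ x y : ZMod 2, x ≠ y → x + y = 1 := by decide
  have hBw : ∀ x : Fin n → ZMod 2, Bf x w = x a + x b := by
    intro x
    rw [hw, Bf_add_right, Bf_single, Bf_single]
  clear_value w
  have hww : Bf w w = 0 := by
    rw [hBw, hw]
    simp only [Pi.add_apply, Pi.single_eq_same, Pi.single_eq_of_ne hab.symm,
      Pi.single_eq_of_ne hab]
    decide
  have hv₁v₁ : Bf v₁ v₁ = 0 := Bf_self_zero_of_even hev₁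
  have hv₂v₂ : Bf v₂ v₂ = 0 := Bf_self_zero_of_even hev₂
  have hv₁w : Bf v₁ w = 1 := by rw [hBw]; exact hne1 _ _ hab₁
  have hv₂w : Bf v₂ w = 1 := by rw [hBw]; exact hne1 _ _ hab₂
  -- transvection vectors
  set u₁ : Fin n → ZMod 2 := v₁ + w with hu₁
  set u₂ : Fin n → ZMod 2 := w + v₂ with hu₂
  clear_value u₁ u₂
  have hu₁u₁ : Bf u₁ u₁ = 0 := by
    rw [hu₁, Bf_add_left, Bf_add_right, Bf_add_right, hv₁v₁, hww, Bf_comm w v₁, hv₁w]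
    decide
  have hu₂u₂ : Bf u₂ u₂ = 0 := by
    rw [hu₂, Bf_add_left, Bf_add_right, Bf_add_right, hv₂v₂, hww, Bf_comm w v₂, hv₂w]
    decide
  set g := (tv u₁ hu₁u₁).trans (tv u₂ hu₂u₂) with hg
  have hgiso : ∀ x y, Bf (g x) (g y) = Bf x y := by
    intro x y
    rw [hg]
    simp only [LinearEquiv.trans_apply]
    rw [tv_isometry, tv_isometry]
  have hgv : g v₁ = v₂ := by
    rw [hg]
    simp only [LinearEquiv.trans_apply]
    have h1 : tv u₁ hu₁u₁ v₁ = w := by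
      rw [tv_apply_of_eq u₁ hu₁u₁ v₁ (by rw [hu₁, Bf_add_right, hv₁v₁, hv₁w, zero_add]),
        hu₁]
      funext i
      simp only [Pi.add_apply]
      rw [← add_assoc, hadd (v₁ i), zero_add]
    rw [h1, tv_apply_of_eq u₂ hu₂u₂ w (by rw [hu₂, Bf_add_right, hww, Bf_comm w v₂, hv₂w, zero_add]),
      hu₂]
    funext i
    simp only [Pi.add_apply]
    rw [← add_assoc, hadd (w i), zero_add]
  exact card_eq_of_isometry v₁ v₂ g hgiso hgv
end

section
/- Let C₂ ⊆ C₁ ⊆ F_2^n be linear codes. Inside the space of functions F_2^n → ℂ, the ℂ-linear span of the coset indicator functions {𝟙_{C₂+w} : w ∈ C₁} equals the ℂ-linear span of the codeword states {c_w : w ∈ C₂^⊥} defined with respect to C₁, where 𝟙_{C₂+w}(x) = 1 if x ∈ C₂ + w and 0 otherwise. (Steane's codewords generate exactly the same quantum code.) -/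
open Finset
open scoped Classical

lemma zmod2_add_self (a : ZMod 2) : a + a = 0 := by revert a; decide

lemma vec_add_self {n : ℕ} (x : Fin n → ZMod 2) : x + x = 0 := by
  funext i; exact zmod2_add_self (x i)

lemma signC_add (a b : ZMod 2) : signC (a + b) = signC a * signC b := by
  have h : ∀ c : ZMod 2, c = 0 ∨ c = 1 := by decide
  rcases h a with rfl | rfl <;> rcases h b with rfl | rfl <;>
    norm_num [signC] <;> rfl

lemma dot_add_left {n : ℕ} (x y w : Fin n → ZMod 2) :
    ∑ i, (x + y) i * w i = (∑ i, x i * w i) + ∑ i, y i * w i := by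
  simp [add_mul, Finset.sum_add_distrib]

lemma dot_comm {n : ℕ} (x y : Fin n → ZMod 2) :
    ∑ i, x i * y i = ∑ i, y i * x i :=
  Finset.sum_congr rfl fun i _ => mul_comm _ _

lemma mem_coset_iff {n : ℕ} (C : Submodule (ZMod 2) (Fin n → ZMod 2))
    (x w : Fin n → ZMod 2) : (∃ u ∈ C, x = u + w) ↔ x + w ∈ C := by
  constructor
  · rintro ⟨u, hu, rfl⟩
    have : u + w + w = u := by rw [add_assoc, vec_add_self, add_zero]
    rwa [this]
  · intro hxw
    exact ⟨x + w, hxw, by rw [add_assoc, vec_add_self, add_zero]⟩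

noncomputable def dotForm (n : ℕ) : LinearMap.BilinForm (ZMod 2) (Fin n → ZMod 2) :=
  LinearMap.mk₂ (ZMod 2) (fun v c => ∑ i, v i * c i)
    (fun a b c => by simp [add_mul, Finset.sum_add_distrib])
    (fun m a c => by simp [Finset.mul_sum, mul_assoc])
    (fun a b c => by simp [mul_add, Finset.sum_add_distrib])
    (fun m a c => by simp [Finset.mul_sum, mul_left_comm, mul_assoc])

lemma dotForm_nondeg (n : ℕ) : (dotForm n).Nondegenerate := by
  have hL : ∀ v, (∀ y, dotForm n v y = 0) → v = 0 := by
    intro v hv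
    funext i
    have := hv (Pi.single i 1)
    simpa [dotForm, Pi.single_apply, Finset.sum_ite_eq, Finset.sum_ite_eq'] using this
  refine ⟨hL, fun v hv => hL v fun y => ?_⟩
  simpa [dotForm, dot_comm y v] using hv y

lemma dotForm_refl (n : ℕ) : (dotForm n).IsRefl := by
  intro x y hxy
  simpa [dotForm, dot_comm y x] using hxy

lemma dualCode_eq_orthogonal {n : ℕ} (C : Submodule (ZMod 2) (Fin n → ZMod 2)) :
    dualCode C = (dotForm n).orthogonal C := by
  ext v
  constructor
  · intro hv c hc
    have := hv c hc
    simpa [dotForm, LinearMap.BilinForm.IsOrtho, dot_comm c v] using this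
  · intro hv c hc
    have := hv c hc
    simpa [dotForm, LinearMap.BilinForm.IsOrtho, dot_comm c v] using this

lemma bidual {n : ℕ} (C : Submodule (ZMod 2) (Fin n → ZMod 2)) :
    dualCode (dualCode C) = C := by
  rw [dualCode_eq_orthogonal, dualCode_eq_orthogonal,
    LinearMap.BilinForm.orthogonal_orthogonal (dotForm_nondeg n) (dotForm_refl n)]

lemma char_sum {n : ℕ} (D : Submodule (ZMod 2) (Fin n → ZMod 2)) (y : Fin n → ZMod 2) :
    ∑ d ∈ Finset.univ.filter (· ∈ D), signC (∑ i, y i * d i)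
      = if y ∈ dualCode D then ((Finset.univ.filter (· ∈ D)).card : ℂ) else 0 := by
  split
  · next hy =>
    rw [Finset.sum_congr rfl fun d hd => ?_, Finset.sum_const, nsmul_eq_mul, mul_one]
    rw [hy d (Finset.mem_filter.mp hd).2]; rfl
  · next hy =>
    have : ∃ d₀ ∈ D, ∑ i, y i * d₀ i ≠ 0 := by
      by_contra hcon
      push_neg at hcon
      exact hy hcon
    obtain ⟨d₀, hd₀, hyd₀⟩ := this
    have hyd1 : (∑ i, y i * d₀ i) = 1 := by
      have h2 : ∀ c : ZMod 2, c = 0 ∨ c = 1 := by decide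
      rcases h2 (∑ i, y i * d₀ i) with h | h
      · exact absurd h hyd₀
      · exact h
    set S := ∑ d ∈ Finset.univ.filter (· ∈ D), signC (∑ i, y i * d i) with hS
    have key : S = -S := by
      rw [hS]
      rw [← Finset.sum_neg_distrib]
      refine Finset.sum_nbij' (fun d => d + d₀) (fun d => d + d₀) ?_ ?_ ?_ ?_ ?_
      · intro a ha
        simp only [Finset.mem_filter, Finset.mem_univ, true_and] at *
        exact D.add_mem ha hd₀
      · intro a ha
        simp only [Finset.mem_filter, Finset.mem_univ, true_and] at *
        exact D.add_mem ha hd₀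
      · intro a _; show a + d₀ + d₀ = a; rw [add_assoc, vec_add_self, add_zero]
      · intro a _; show a + d₀ + d₀ = a; rw [add_assoc, vec_add_self, add_zero]
      · intro a _
        have : ∑ i, y i * (a + d₀) i = (∑ i, y i * a i) + ∑ i, y i * d₀ i := by
          simp [mul_add, Finset.sum_add_distrib]
        rw [this, signC_add, hyd1]
        simp [signC]
    have : S = 0 := by linear_combination (1/2 : ℂ) * key
    exact this

/-- Steane's codewords — the indicator functions of the cosets `C₂ + w` for
`w ∈ C₁` — span exactly the same quantum code as the states
`{c_w : w ∈ C₂^⊥}`. -/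
theorem span_cosetIndicators_eq_span_codewordStates
    {n : ℕ} (C₁ C₂ : Submodule (ZMod 2) (Fin n → ZMod 2)) (h : C₂ ≤ C₁) :
    Submodule.span ℂ
        {f : (Fin n → ZMod 2) → ℂ | ∃ w ∈ C₁,
          f = fun x => if ∃ u ∈ C₂, x = u + w then (1 : ℂ) else 0}
      = Submodule.span ℂ
        {f : (Fin n → ZMod 2) → ℂ | ∃ w ∈ dualCode C₂, f = codewordState C₁ w} := by
  set r : ℂ := (((2 : ℝ) ^ (-(Module.finrank (ZMod 2) C₁ : ℝ) / 2) : ℝ) : ℂ) with hr_def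
  have hr : r ≠ 0 := by
    rw [hr_def]
    exact_mod_cast Complex.ofReal_ne_zero.mpr
      (ne_of_gt (Real.rpow_pos_of_pos (by norm_num) _))
  set sD := Finset.univ.filter (· ∈ dualCode C₂) with hsD
  set s₁ := Finset.univ.filter (· ∈ C₁) with hs₁
  set s₂ := Finset.univ.filter (· ∈ C₂) with hs₂
  have hND : ((sD.card : ℂ)) ≠ 0 := by
    have : (0 : Fin n → ZMod 2) ∈ sD := by
      simp [hsD, Submodule.zero_mem]
    have hpos : 0 < sD.card := Finset.card_pos.mpr ⟨0, this⟩
    exact Nat.cast_ne_zero.mpr hpos.ne'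
  have hM : ((s₂.card : ℂ)) ≠ 0 := by
    have : (0 : Fin n → ZMod 2) ∈ s₂ := by
      simp [hs₂, Submodule.zero_mem]
    have hpos : 0 < s₂.card := Finset.card_pos.mpr ⟨0, this⟩
    exact Nat.cast_ne_zero.mpr hpos.ne'
  apply le_antisymm
  · rw [Submodule.span_le]
    rintro f ⟨w, hw, rfl⟩
    have hfe : (fun x => if ∃ u ∈ C₂, x = u + w then (1 : ℂ) else 0)
        = ∑ w' ∈ sD, (signC (∑ i, w i * w' i) / (r * sD.card)) • codewordState C₁ w' := by
      funext x
      rw [Finset.sum_apply]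
      by_cases hx : x ∈ C₁
      · have hterm : ∀ w' ∈ sD,
            ((signC (∑ i, w i * w' i) / (r * sD.card)) • codewordState C₁ w') x
              = signC (∑ i, (x + w) i * w' i) / sD.card := by
          intro w' _
          have hcw : codewordState C₁ w' x = r * signC (∑ i, x i * w' i) := by
            rw [codewordState, if_pos hx]
          rw [Pi.smul_apply, smul_eq_mul, hcw, dot_add_left, add_comm, signC_add]
          field_simp
        rw [Finset.sum_congr rfl hterm, ← Finset.sum_div, char_sum (dualCode C₂) (x + w), bidual]
        by_cases hxw : x + w ∈ C₂
        · rw [if_pos hxw, if_pos ((mem_coset_iff C₂ x w).mpr hxw)]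
          field_simp
          rfl
        · rw [if_neg hxw, if_neg fun hc => hxw ((mem_coset_iff C₂ x w).mp hc)]
          simp
      · rw [if_neg, Finset.sum_eq_zero]
        · intro w' _
          simp [codewordState, hx]
        · rintro ⟨u, hu, rfl⟩
          exact hx (C₁.add_mem (h hu) hw)
    rw [hfe]
    exact Submodule.sum_mem _ fun w' hw' => Submodule.smul_mem _ _
      (Submodule.subset_span ⟨w', by simpa [hsD] using (Finset.mem_filter.mp hw').2, rfl⟩)
  · rw [Submodule.span_le]
    rintro f ⟨w, hw, rfl⟩
    have hfe : codewordState C₁ w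
        = ∑ v ∈ s₁, ((r * signC (∑ i, v i * w i)) / s₂.card) •
            (fun x => if ∃ u ∈ C₂, x = u + v then (1 : ℂ) else 0) := by
      funext x
      rw [Finset.sum_apply]
      by_cases hx : x ∈ C₁
      · have hterm : ∀ v ∈ s₁,
            (((r * signC (∑ i, v i * w i)) / s₂.card) •
              fun x => if ∃ u ∈ C₂, x = u + v then (1 : ℂ) else 0) x
              = if x + v ∈ C₂ then (r * signC (∑ i, v i * w i)) / s₂.card else 0 := by
          intro v _
          rw [Pi.smul_apply, smul_eq_mul]
          by_cases hxv : x + v ∈ C₂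
          · rw [if_pos ((mem_coset_iff C₂ x v).mpr hxv), if_pos hxv, mul_one]
          · rw [if_neg (fun hc => hxv ((mem_coset_iff C₂ x v).mp hc)), if_neg hxv, mul_zero]
        rw [Finset.sum_congr rfl hterm, ← Finset.sum_filter]
        have hbij : ∑ v ∈ s₁.filter (fun v => x + v ∈ C₂),
              (r * signC (∑ i, v i * w i)) / (s₂.card : ℂ)
            = ∑ _u ∈ s₂, (r * signC (∑ i, x i * w i)) / (s₂.card : ℂ) := by
          refine (Finset.sum_nbij' (fun u => x + u) (fun v => x + v) ?_ ?_ ?_ ?_ ?_).symm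
          · intro u hu
            have hu' : u ∈ C₂ := by simpa [hs₂] using hu
            simp only [Finset.mem_filter, Finset.mem_univ, true_and, hs₁]
            constructor
            · exact C₁.add_mem hx (h hu')
            · have : x + (x + u) = u := by rw [← add_assoc, vec_add_self, zero_add]
              rw [this]; exact hu'
          · intro v hv
            have hv' : x + v ∈ C₂ := (Finset.mem_filter.mp hv).2
            simpa [hs₂] using hv'
          · intro a _; show x + (x + a) = a; rw [← add_assoc, vec_add_self, zero_add]
          · intro a _; show x + (x + a) = a; rw [← add_assoc, vec_add_self, zero_add]
          · intro u hu
            have hu' : u ∈ C₂ := by simpa [hs₂] using hu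
            have hdot : ∑ i, (x + u) i * w i = ∑ i, x i * w i := by
              rw [dot_add_left, dot_comm u w, hw u hu', add_zero]
            rw [hdot]
        rw [hbij, Finset.sum_const, nsmul_eq_mul]
        have hcw : codewordState C₁ w x = r * signC (∑ i, x i * w i) := by
          simp only [codewordState]; rw [if_pos hx]
        rw [hcw]
        field_simp
      · have h0 : ∀ v ∈ s₁,
            (((r * signC (∑ i, v i * w i)) / s₂.card) •
              fun x => if ∃ u ∈ C₂, x = u + v then (1 : ℂ) else 0) x = 0 := by
          intro v hv
          have hv' : v ∈ C₁ := by simpa [hs₁] using hv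
          rw [Pi.smul_apply, smul_eq_mul, if_neg, mul_zero]
          rintro ⟨u, hu, rfl⟩
          exact hx (C₁.add_mem (h hu) hv')
        rw [Finset.sum_eq_zero h0]
        simp [codewordState, hx]
    rw [hfe]
    exact Submodule.sum_mem _ fun v hv => Submodule.smul_mem _ _
      (Submodule.subset_span ⟨v, by simpa [hs₁] using (Finset.mem_filter.mp hv).2, rfl⟩)
end
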